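/- arXiv:2111.01840 — 2 statements merged into one kernel-verified Lean document; each statement's English description precedes it below -/
import Mathlib

section
/- (First-order marginal invariance of the NNMP mixture) Suppose for each l = 1,...,L the bivariate pmf f_l on ℕ×ℕ has first marginal g and second marginal h_l, i.e., ∑_v f_l(u,v) = g(u) and ∑_u f_l(u,v) = h_l(v). If Y_2 has pmf that, conditionally on neighbor values, is given by a mixture p(u | v_1,...,v_L) = ∑_l w_l f_l(u, v_l)/h_l(v_l) with weights w_l ≥ 0 summing to 1, and each neighbor V_l has marginal pmf h_l, then marginalizing over the neighbor V_l in each component yields ∑_v (f_l(u,v)/h_l(v)) h_l(v) = g(u), so each mixture component, and hence the mixture, has marginal pmf g. -/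
theorem tsum_div_mul_cancel_of_ne_zero {α K : Type*} [DivisionRing K] [TopologicalSpace K]
    {a b : α → K} (hb : ∀ v, b v ≠ 0) : ∑' v, a v / b v * b v = ∑' v, a v :=
  tsum_congr fun v => div_mul_cancel₀ (a v) (hb v)

theorem stmt3_general (L : ℕ) (f : Fin L → ℕ → ℕ → ℝ)
    (g : ℕ → ℝ) (hg : ∀ l u, ∑' v, f l u v = g u)
    (h : Fin L → ℕ → ℝ) (hhpos : ∀ l v, 0 < h l v)
    (w : Fin L → ℝ) (hw1 : ∑ l, w l = 1) :
    (∀ l u, ∑' v, (f l u v / h l v) * h l v = g u) ∧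
    (∀ u, ∑ l, w l * (∑' v, (f l u v / h l v) * h l v) = g u) := by
  have component : ∀ l u, ∑' v, (f l u v / h l v) * h l v = g u := fun l u =>
    (tsum_div_mul_cancel_of_ne_zero fun v => (hhpos l v).ne').trans (hg l u)
  refine ⟨component, fun u => ?_⟩
  simp only [component, ← Finset.sum_mul, hw1, one_mul]

theorem stmt3 (L : ℕ) (f : Fin L → ℕ → ℕ → ℝ) (hf0 : ∀ l u v, 0 ≤ f l u v)
    (hfsum : ∀ l, ∑' p : ℕ × ℕ, f l p.1 p.2 = 1)
    (g : ℕ → ℝ) (hg : ∀ l u, ∑' v, f l u v = g u)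
    (h : Fin L → ℕ → ℝ) (hh : ∀ l v, h l v = ∑' u, f l u v) (hhpos : ∀ l v, 0 < h l v)
    (w : Fin L → ℝ) (hw0 : ∀ l, 0 ≤ w l) (hw1 : ∑ l, w l = 1) :
    (∀ l u, ∑' v, (f l u v / h l v) * h l v = g u) ∧
    (∀ u, ∑ l, w l * (∑' v, (f l u v / h l v) * h l v) = g u) :=
  stmt3_general L f g hg h hhpos w hw1
end

section
/- (Stationary marginals of an NNMP over the reference sequence, by induction) Suppose Y(s_1) has pmf g, and for each i ≥ 2, conditional on the neighbor values, Y(s_i) has pmf ∑_{l=1}^{i_L} w_l(s_i) f_l(·|y(s_{(il)})), where each f_l(u|v) = f^{(l)}(u,v)/h^{(l)}(v) for a bivariate pmf f^{(l)} with first marginal g and second marginal h^{(l)} = g. Then, by induction on i, every Y(s_i) has marginal pmf g. -/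
/-!
Write the joint pmf as a product `∏ₖ κₖ(yₖ | y₀, …, yₖ₋₁)` of conditional pmfs. Each conditional
pmf sums to one, so summing out the sites after `i` leaves the law of `(Y₀, …, Yᵢ)`, and
`E f(Yᵢ) = ∑ₗ wₗ E[∑ᵤ fₗ(u | Y_{nb l}) f(u)]`. The neighbours precede `i`, so by strong induction
each `Y_{nb l}` has pmf `g`, and the first-marginal condition `∑ᵥ f⁽ˡ⁾(u, v) = g(u)` then gives
`E f(Yᵢ) = ∑ᵤ g(u) f(u)`. In `ℝ≥0∞` every interchange of sums is free of summability conditions.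
-/

open scoped ENNReal

section SeqDensity

variable {α : Type*}

/-- The joint density of `(Y 0, …, Y (k-1))` when `κ k z` is the conditional density of `Y k`
given `(Y 0, …, Y (k-1)) = z`. -/
noncomputable def seqDensity (κ : (k : ℕ) → (Fin k → α) → α → ℝ≥0∞) :
    (k : ℕ) → (Fin k → α) → ℝ≥0∞
  | 0, _ => 1
  | k + 1, z => seqDensity κ k (Fin.init z) * κ k (Fin.init z) (z (Fin.last k))

variable (κ : (k : ℕ) → (Fin k → α) → α → ℝ≥0∞)

@[simp]
lemma seqDensity_zero (z : Fin 0 → α) : seqDensity κ 0 z = 1 := rfl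

@[simp]
lemma seqDensity_snoc {k : ℕ} (z : Fin k → α) (u : α) :
    seqDensity κ (k + 1) (Fin.snoc z u) = seqDensity κ k z * κ k z u := by
  simp [seqDensity]

lemma seqDensity_eq_prod : ∀ {k : ℕ} (z : Fin k → α),
    seqDensity κ k z = ∏ i : Fin k, κ i (Fin.take i i.isLt.le z) (z i)
  | 0, _ => rfl
  | k + 1, z => by
    rw [Fin.prod_univ_castSucc, seqDensity, seqDensity_eq_prod (Fin.init z)]
    rfl

lemma tsum_seqDensity_succ_mul {k : ℕ} (f : (Fin (k + 1) → α) → ℝ≥0∞) :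
    ∑' z, seqDensity κ (k + 1) z * f z =
      ∑' z, seqDensity κ k z * ∑' u, κ k z u * f (Fin.snoc z u) := by
  rw [← (Fin.snocEquiv fun _ => α).tsum_eq, ENNReal.tsum_prod', ENNReal.tsum_comm]
  refine tsum_congr fun z => ?_
  change ∑' u, seqDensity κ (k + 1) (Fin.snoc z u) * f (Fin.snoc z u) = _
  simp only [seqDensity_snoc, mul_assoc, ENNReal.tsum_mul_left]

lemma tsum_seqDensity_mul_take {m K : ℕ} (hmK : m ≤ K)
    (hκ : ∀ k, m ≤ k → k < K → ∀ z, ∑' u, κ k z u = 1) (f : (Fin m → α) → ℝ≥0∞) :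
    ∑' z : Fin K → α, seqDensity κ K z * f (Fin.take m hmK z) =
      ∑' z, seqDensity κ m z * f z := by
  induction K, hmK using Nat.le_induction with
  | base => simp
  | succ K hmK ih =>
    have htake (z : Fin K → α) (u : α) :
        Fin.take (α := fun _ => α) m (hmK.trans K.le_succ) (Fin.snoc z u) = Fin.take m hmK z := by
      rw [← Fin.take_init (α := fun _ => α), Fin.init_snoc]
    simp only [tsum_seqDensity_succ_mul, htake, ENNReal.tsum_mul_right, hκ K hmK K.lt_succ_self,
      one_mul]
    exact ih fun k hmk hkK => hκ k hmk (hkK.trans K.lt_succ_self)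

lemma tsum_seqDensity_mul_apply {j K : ℕ} (hjK : j < K)
    (hκ : ∀ k, j < k → k < K → ∀ z, ∑' u, κ k z u = 1) (f : α → ℝ≥0∞) :
    ∑' z : Fin K → α, seqDensity κ K z * f (z ⟨j, hjK⟩) =
      ∑' z : Fin j → α, seqDensity κ j z * ∑' u, κ j z u * f u := by
  have hlast := tsum_seqDensity_succ_mul κ (fun z => f (z (Fin.last j)))
  simp only [Fin.snoc_last] at hlast
  rw [← hlast, ← tsum_seqDensity_mul_take κ hjK hκ]
  rfl

end SeqDensity

section ConditionalDensity

variable {α : Type*} {g : α → ℝ≥0∞} {F : α → α → ℝ≥0∞}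

/-- The paper's `f_l(u | v) = f⁽ˡ⁾(u, v) / h⁽ˡ⁾(v)`, with `h⁽ˡ⁾ = g`. -/
noncomputable def condDensity (g : α → ℝ≥0∞) (F : α → α → ℝ≥0∞) (u v : α) : ℝ≥0∞ :=
  F u v / g v

lemma tsum_condDensity (hg0 : ∀ v, g v ≠ 0) (hg : ∀ v, g v ≠ ∞)
    (hF : ∀ v, ∑' u, F u v = g v) (v : α) : ∑' u, condDensity g F u v = 1 := by
  simp only [condDensity, div_eq_mul_inv, ENNReal.tsum_mul_right, hF]
  exact ENNReal.mul_inv_cancel (hg0 v) (hg v)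

lemma tsum_mul_tsum_condDensity_mul (hg0 : ∀ v, g v ≠ 0) (hg : ∀ v, g v ≠ ∞)
    (hF : ∀ u, ∑' v, F u v = g u) (f : α → ℝ≥0∞) :
    ∑' v, g v * ∑' u, condDensity g F u v * f u = ∑' u, g u * f u := by
  calc ∑' v, g v * ∑' u, condDensity g F u v * f u = ∑' v, ∑' u, F u v * f u := by
        refine tsum_congr fun v => ?_
        rw [← ENNReal.tsum_mul_left]
        refine tsum_congr fun u => ?_
        rw [condDensity, ← mul_assoc, ENNReal.mul_div_cancel (hg0 v) (hg v)]
    _ = ∑' u, g u * f u := by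
        rw [ENNReal.tsum_comm]
        simp only [ENNReal.tsum_mul_right, hF]

end ConditionalDensity

section NNMP

variable {α : Type*} {n : ℕ} {iL : Fin n → ℕ} (g : α → ℝ≥0∞)
  (F : (i : Fin n) → Fin (iL i) → α → α → ℝ≥0∞) (w : (i : Fin n) → Fin (iL i) → ℝ≥0∞)
  (nb : (i : Fin n) → Fin (iL i) → Fin n) (hnb : ∀ i l, (nb i l : ℕ) < i)

/-- The conditional pmf of `Y(s_k)` given `(Y(s_0), …, Y(s_{k-1})) = z` (sites indexed from `0`);
its value for `k ≥ n` plays no role. -/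
noncomputable def nnmpKernel (k : ℕ) (z : Fin k → α) (u : α) : ℝ≥0∞ :=
  if hk : k < n then
    if k = 0 then g u
    else ∑ l, w ⟨k, hk⟩ l * condDensity g (F ⟨k, hk⟩ l) u (z ⟨nb ⟨k, hk⟩ l, hnb _ _⟩)
  else 1

lemma nnmpKernel_of_eq_zero (i : Fin n) (hi : (i : ℕ) = 0) (z : Fin i → α) (u : α) :
    nnmpKernel g F w nb hnb i z u = g u := by
  rw [nnmpKernel, dif_pos i.isLt, if_pos hi]

lemma nnmpKernel_of_pos (i : Fin n) (hi : 0 < (i : ℕ)) (z : Fin i → α) (u : α) :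
    nnmpKernel g F w nb hnb i z u =
      ∑ l, w i l * condDensity g (F i l) u (z ⟨nb i l, hnb i l⟩) := by
  rw [nnmpKernel, dif_pos i.isLt, if_neg hi.ne']

variable {g F w}

lemma tsum_nnmpKernel (hg0 : ∀ v, g v ≠ 0) (hg : ∀ v, g v ≠ ∞)
    (hF : ∀ i l v, ∑' u, F i l u v = g v) (hw : ∀ i : Fin n, 0 < (i : ℕ) → ∑ l, w i l = 1)
    (i : Fin n) (hi : 0 < (i : ℕ)) (z : Fin i → α) :
    ∑' u, nnmpKernel g F w nb hnb i z u = 1 := by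
  simp only [nnmpKernel_of_pos g F w nb hnb i hi,
    Summable.tsum_finsetSum fun _ _ => ENNReal.summable, ENNReal.tsum_mul_left,
    tsum_condDensity hg0 hg (hF i _), mul_one, hw i hi]

theorem tsum_seqDensity_nnmpKernel_mul_apply (hg0 : ∀ v, g v ≠ 0) (hg : ∀ v, g v ≠ ∞)
    (hF₁ : ∀ i l u, ∑' v, F i l u v = g u) (hF₂ : ∀ i l v, ∑' u, F i l u v = g v)
    (hw : ∀ i : Fin n, 0 < (i : ℕ) → ∑ l, w i l = 1) (j : ℕ) :
    ∀ {K : ℕ} (hjK : j < K), K ≤ n → ∀ f : α → ℝ≥0∞,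
      ∑' z : Fin K → α, seqDensity (nnmpKernel g F w nb hnb) K z * f (z ⟨j, hjK⟩) =
        ∑' u, g u * f u := by
  induction j using Nat.strong_induction_on with
  | _ j ih =>
  intro K hjK hKn f
  have hnorm : ∀ k, j < k → k < K → ∀ z, ∑' u, nnmpKernel g F w nb hnb k z u = 1 :=
    fun k hjk hkK => tsum_nnmpKernel nb hnb hg0 hg hF₂ hw ⟨k, by omega⟩ (Nat.zero_lt_of_lt hjk)
  rw [tsum_seqDensity_mul_apply _ hjK hnorm]
  rcases j.eq_zero_or_pos with rfl | hj
  · simp [nnmpKernel_of_eq_zero g F w nb hnb ⟨0, hjK.trans_le hKn⟩ rfl]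
  obtain ⟨i, rfl⟩ : ∃ i : Fin n, (i : ℕ) = j := ⟨⟨j, hjK.trans_le hKn⟩, rfl⟩
  calc ∑' z : Fin i → α, seqDensity (nnmpKernel g F w nb hnb) i z *
        ∑' u, nnmpKernel g F w nb hnb i z u * f u
      = ∑ l, w i l * ∑' z : Fin i → α, seqDensity (nnmpKernel g F w nb hnb) i z *
          ∑' u, condDensity g (F i l) u (z ⟨nb i l, hnb i l⟩) * f u := by
        simp only [nnmpKernel_of_pos g F w nb hnb i hj, Finset.sum_mul, mul_assoc,
          Summable.tsum_finsetSum fun _ _ => ENNReal.summable, ENNReal.tsum_mul_left,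
          Finset.mul_sum]
        refine Finset.sum_congr rfl fun l _ => ?_
        simp only [mul_left_comm _ (w i l), ENNReal.tsum_mul_left]
    _ = ∑ l, w i l * ∑' v, g v * ∑' u, condDensity g (F i l) u v * f u := by
        refine Finset.sum_congr rfl fun l _ => ?_
        rw [ih _ (hnb i l) (hnb i l) i.isLt.le (fun v => ∑' u, condDensity g (F i l) u v * f u)]
    _ = ∑' u, g u * f u := by
        simp only [tsum_mul_tsum_condDensity_mul hg0 hg (hF₁ i _), ← Finset.sum_mul, hw i hj,
          one_mul]

end NNMP

section RealData

variable {β : Type*} {f : β → ℝ}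

lemma tsum_ofReal_of_tsum_ne_zero (hf : ∀ x, 0 ≤ f x) (h : ∑' x, f x ≠ 0) :
    ∑' x, ENNReal.ofReal (f x) = ENNReal.ofReal (∑' x, f x) :=
  (ENNReal.ofReal_tsum_of_nonneg hf
    (by_contra fun hs => h (tsum_eq_zero_of_not_summable hs))).symm

lemma tsum_eq_of_tsum_ofReal_eq {a : ℝ} (hf : ∀ x, 0 ≤ f x) (ha : 0 ≤ a)
    (h : ∑' x, ENNReal.ofReal (f x) = ENNReal.ofReal a) : ∑' x, f x = a := by
  have := congrArg ENNReal.toReal h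
  rwa [ENNReal.tsum_toReal_eq fun _ => ENNReal.ofReal_ne_top, ENNReal.toReal_ofReal ha,
    tsum_congr fun x => ENNReal.toReal_ofReal (hf x)] at this

variable {α : Type*} {n : ℕ} {iL : Fin n → ℕ} {g : α → ℝ}
  {F : (i : Fin n) → Fin (iL i) → α → α → ℝ} {w : (i : Fin n) → Fin (iL i) → ℝ}
  (nb : (i : Fin n) → Fin (iL i) → Fin n) (hnb : ∀ i l, (nb i l : ℕ) < i)

variable (g F w) in
noncomputable def nnmpJoint (y : Fin n → α) : ℝ :=
  (if h : 0 < n then g (y ⟨0, h⟩) else 1) *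
    ∏ i : Fin n, (if 0 < (i : ℕ) then
      ∑ l, w i l * (F i l (y i) (y (nb i l)) / g (y (nb i l))) else 1)

lemma nnmpJoint_nonneg (hg : ∀ u, 0 < g u) (hF : ∀ i l u v, 0 ≤ F i l u v)
    (hw : ∀ i l, 0 ≤ w i l) (y : Fin n → α) : 0 ≤ nnmpJoint g F w nb y := by
  refine mul_nonneg ?_ (Finset.prod_nonneg fun i _ => ?_) <;> split_ifs
  exacts [(hg _).le, zero_le_one,
    Finset.sum_nonneg fun l _ => mul_nonneg (hw i l) (div_nonneg (hF ..) (hg _).le), zero_le_one]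

lemma ofReal_nnmpJoint_eq_seqDensity (hg : ∀ u, 0 < g u) (hF : ∀ i l u v, 0 ≤ F i l u v)
    (hw : ∀ i l, 0 ≤ w i l) (y : Fin n → α) :
    ENNReal.ofReal (nnmpJoint g F w nb y) =
      seqDensity (nnmpKernel (fun u => ENNReal.ofReal (g u))
        (fun i l u v => ENNReal.ofReal (F i l u v)) (fun i l => ENNReal.ofReal (w i l)) nb hnb)
        n y := by
  rw [seqDensity_eq_prod]
  cases n with
  | zero => simp [nnmpJoint]
  | succ n =>
    have hterm (i : Fin (n + 1)) (l : Fin (iL i)) :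
        0 ≤ w i l * (F i l (y i) (y (nb i l)) / g (y (nb i l))) :=
      mul_nonneg (hw i l) (div_nonneg (hF ..) (hg _).le)
    have hsucc (i : Fin n) : 0 < (i.succ : ℕ) := Nat.succ_pos i
    rw [nnmpJoint, dif_pos n.succ_pos, Fin.prod_univ_succ, Fin.prod_univ_succ,
      if_neg (show ¬0 < ((0 : Fin (n + 1)) : ℕ) from lt_irrefl 0), one_mul,
      ENNReal.ofReal_mul (hg _).le,
      ENNReal.ofReal_prod_of_nonneg fun i _ => by
        rw [if_pos (hsucc i)]; exact Finset.sum_nonneg fun l _ => hterm _ l,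
      nnmpKernel_of_eq_zero _ _ _ _ _ 0 rfl]
    congr 1
    refine Finset.prod_congr rfl fun i _ => ?_
    rw [if_pos (hsucc i), nnmpKernel_of_pos _ _ _ _ _ i.succ (hsucc i),
      ENNReal.ofReal_sum_of_nonneg fun l _ => hterm _ l]
    refine Finset.sum_congr rfl fun l _ => ?_
    rw [ENNReal.ofReal_mul (hw _ _), ENNReal.ofReal_div_of_pos (hg _)]
    rfl

end RealData

theorem stmt17_general (n : ℕ) (g : ℕ → ℝ) (hgpos : ∀ u, 0 < g u)
    (iL : Fin n → ℕ)
    (F : (i : Fin n) → Fin (iL i) → ℕ → ℕ → ℝ)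
    (hF0 : ∀ i l u v, 0 ≤ F i l u v)
    (hFm1 : ∀ i l u, ∑' v, F i l u v = g u)
    (hFm2 : ∀ i l v, ∑' u, F i l u v = g v)
    (w : (i : Fin n) → Fin (iL i) → ℝ)
    (hw0 : ∀ i l, 0 ≤ w i l) (hw1 : ∀ i : Fin n, 0 < (i : ℕ) → ∑ l, w i l = 1)
    (nb : (i : Fin n) → Fin (iL i) → Fin n) (hnb : ∀ i l, (nb i l : ℕ) < (i : ℕ))
    (P : (Fin n → ℕ) → ℝ)
    (hP : ∀ y, P y = (if h : 0 < n then g (y ⟨0, h⟩) else 1) *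
      ∏ i : Fin n, (if 0 < (i : ℕ) then
        ∑ l, w i l * (F i l (y i) (y (nb i l)) / g (y (nb i l))) else 1)) :
    ∀ (i : Fin n) (m : ℕ),
      (∑' y : Fin n → ℕ, if y i = m then P y else 0) = g m := by
  intro i m
  have hF₁ : ∀ i l u, ∑' v, ENNReal.ofReal (F i l u v) = ENNReal.ofReal (g u) := fun i l u => by
    rw [tsum_ofReal_of_tsum_ne_zero (hF0 i l u) (by rw [hFm1]; exact (hgpos u).ne'), hFm1]
  have hF₂ : ∀ i l v, ∑' u, ENNReal.ofReal (F i l u v) = ENNReal.ofReal (g v) := fun i l v => by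
    rw [tsum_ofReal_of_tsum_ne_zero (hF0 i l · v) (by rw [hFm2]; exact (hgpos v).ne'), hFm2]
  have hw : ∀ i : Fin n, 0 < (i : ℕ) → ∑ l, ENNReal.ofReal (w i l) = 1 := fun i hi => by
    rw [← ENNReal.ofReal_sum_of_nonneg fun l _ => hw0 i l, hw1 i hi, ENNReal.ofReal_one]
  have hmarg := tsum_seqDensity_nnmpKernel_mul_apply nb hnb
    (fun u => (ENNReal.ofReal_pos.mpr (hgpos u)).ne') (fun _ => ENNReal.ofReal_ne_top)
    hF₁ hF₂ hw i i.isLt le_rfl (fun u => if u = m then 1 else 0)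
  simp only [mul_ite, mul_one, mul_zero, tsum_ite_eq] at hmarg
  have hP' : ∀ y, P y = nnmpJoint g F w nb y := hP
  refine tsum_eq_of_tsum_ofReal_eq (fun y => ?_) (hgpos m).le ?_
  · split_ifs
    exacts [hP' y ▸ nnmpJoint_nonneg nb hgpos hF0 hw0 y, le_rfl]
  · rw [← hmarg]
    refine tsum_congr fun y => ?_
    split_ifs
    exacts [by rw [hP', ofReal_nnmpJoint_eq_seqDensity nb hnb hgpos hF0 hw0], ENNReal.ofReal_zero]

theorem stmt17 (n : ℕ) (g : ℕ → ℝ) (hgpos : ∀ u, 0 < g u) (hgsum : ∑' u, g u = 1)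
    (iL : Fin n → ℕ)
    (F : (i : Fin n) → Fin (iL i) → ℕ → ℕ → ℝ)
    (hF0 : ∀ i l u v, 0 ≤ F i l u v)
    (hFm1 : ∀ i l u, ∑' v, F i l u v = g u)
    (hFm2 : ∀ i l v, ∑' u, F i l u v = g v)
    (w : (i : Fin n) → Fin (iL i) → ℝ)
    (hw0 : ∀ i l, 0 ≤ w i l) (hw1 : ∀ i : Fin n, 0 < (i : ℕ) → ∑ l, w i l = 1)
    (nb : (i : Fin n) → Fin (iL i) → Fin n) (hnb : ∀ i l, (nb i l : ℕ) < (i : ℕ))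
    (P : (Fin n → ℕ) → ℝ)
    (hP : ∀ y, P y = (if h : 0 < n then g (y ⟨0, h⟩) else 1) *
      ∏ i : Fin n, (if 0 < (i : ℕ) then
        ∑ l, w i l * (F i l (y i) (y (nb i l)) / g (y (nb i l))) else 1)) :
    ∀ (i : Fin n) (m : ℕ),
      (∑' y : Fin n → ℕ, if y i = m then P y else 0) = g m :=
  stmt17_general n g hgpos iL F hF0 hFm1 hFm2 w hw0 hw1 nb hnb P hP
end
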